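/- Suppose u† ∈ U satisfies F u† = y and R(u†) < ∞, and suppose there exists ω ∈ V such that ξ = F* ω satisfies R(u) ≥ R(u†) + ⟨ξ, u − u†⟩ for all u ∈ U. Let δ > 0, let y^δ ∈ V satisfy ‖y − y^δ‖ ≤ δ, let α > 0, and let u_α be a minimizer of T_{α,y^δ} with R(u_α) < ∞. Then D_ξ(u_α, u†) ≤ (δ + α‖ω‖)²/(2α) and ‖F u_α − y^δ‖ ≤ δ + 2 α ‖ω‖. -/

import Mathlib

open Filter Topology ENNReal

/-!
Test the minimality of `u_α` against `u†`. Since `⟨ξ, u_α − u†⟩ = ⟨ω, F u_α − y⟩`, Cauchy–Schwarz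
turns the comparison into `α D + ½ t² ≤ ½ δ² + α ‖ω‖ (t + δ)` for `t = ‖F u_α − y^δ‖`
and `D = D_ξ(u_α, u†)`. Completing the square in `t` bounds `D`; dropping `α D ≥ 0` leaves a
quadratic inequality in `t` alone.
-/

/-- The Tikhonov functional `T_{α,y}(u) = (1/2)‖F u − y‖² + α R(u)`. -/
noncomputable def Tik {U V : Type*} [NormedAddCommGroup U] [InnerProductSpace ℝ U]
    [NormedAddCommGroup V] [InnerProductSpace ℝ V]
    (F : U →L[ℝ] V) (R : U → ℝ≥0∞) (α : ℝ) (y : V) (u : U) : ℝ≥0∞ :=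
  ENNReal.ofReal (2⁻¹ * ‖F u - y‖ ^ 2) + ENNReal.ofReal α * R u

/-- The Bregman distance `D_ξ(ũ, u) = R(ũ) − R(u) − ⟨ξ, ũ − u⟩` (for `R` finite at
both points, expressed via `ENNReal.toReal`). -/
noncomputable def Breg {U : Type*} [NormedAddCommGroup U] [InnerProductSpace ℝ U]
    (R : U → ℝ≥0∞) (ξ : U) (utilde u : U) : ℝ :=
  (R utilde).toReal - (R u).toReal - (inner ℝ ξ (utilde - u) : ℝ)

section Tikhonov

variable {U V : Type*} [NormedAddCommGroup U] [InnerProductSpace ℝ U]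
  [NormedAddCommGroup V] [InnerProductSpace ℝ V]

theorem toReal_Tik (F : U →L[ℝ] V) {R : U → ℝ≥0∞} {α : ℝ} (hα : 0 ≤ α) (y : V) {u : U}
    (hu : R u ≠ ⊤) : (Tik F R α y u).toReal = 2⁻¹ * ‖F u - y‖ ^ 2 + α * (R u).toReal := by
  rw [Tik, toReal_add ofReal_ne_top (mul_ne_top ofReal_ne_top hu), toReal_mul,
    toReal_ofReal (by positivity), toReal_ofReal hα]

theorem Tik_toReal_le_of_le (F : U →L[ℝ] V) {R : U → ℝ≥0∞} {α : ℝ} (hα : 0 ≤ α) (y : V)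
    {u w : U} (hu : R u ≠ ⊤) (hw : R w ≠ ⊤) (h : Tik F R α y u ≤ Tik F R α y w) :
    2⁻¹ * ‖F u - y‖ ^ 2 + α * (R u).toReal ≤ 2⁻¹ * ‖F w - y‖ ^ 2 + α * (R w).toReal := by
  have hw_top : Tik F R α y w ≠ ⊤ := add_ne_top.2 ⟨ofReal_ne_top, mul_ne_top ofReal_ne_top hw⟩
  simpa only [toReal_Tik F hα y hu, toReal_Tik F hα y hw] using toReal_mono hw_top h

theorem Breg_nonneg {R : U → ℝ≥0∞} {ξ u₀ u : U}
    (hsub : ∀ v, ENNReal.ofReal ((R u₀).toReal + inner ℝ ξ (v - u₀)) ≤ R v) (hu : R u ≠ ⊤) :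
    0 ≤ Breg R ξ u u₀ := by
  have := (ofReal_le_iff_le_toReal hu).1 (hsub u)
  rw [Breg]
  linarith

theorem mul_Breg_add_half_sq_le [CompleteSpace U] [CompleteSpace V] (F : U →L[ℝ] V)
    (ω : V) {R : U → ℝ≥0∞} {udag uα : U} {y yδ : V} {α δ : ℝ} (hα : 0 ≤ α)
    (hsol : F udag = y) (hfin : R udag ≠ ⊤) (hfinα : R uα ≠ ⊤) (hnoise : ‖y - yδ‖ ≤ δ)
    (hmin : Tik F R α yδ uα ≤ Tik F R α yδ udag) :
    α * Breg R (ContinuousLinearMap.adjoint F ω) uα udag + 2⁻¹ * ‖F uα - yδ‖ ^ 2 ≤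
      2⁻¹ * δ ^ 2 + α * ‖ω‖ * (‖F uα - yδ‖ + δ) := by
  have htik := Tik_toReal_le_of_le F hα yδ hfinα hfin hmin
  rw [hsol] at htik
  have hnoise_sq : ‖y - yδ‖ ^ 2 ≤ δ ^ 2 := pow_le_pow_left₀ (norm_nonneg _) hnoise 2
  have hinner : inner ℝ (ContinuousLinearMap.adjoint F ω) (uα - udag) =
      inner ℝ ω (F uα - yδ) - inner ℝ ω (y - yδ) := by
    rw [ContinuousLinearMap.adjoint_inner_left, map_sub, hsol, ← inner_sub_right,
      sub_sub_sub_cancel_right]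
  have hres : -(‖ω‖ * ‖F uα - yδ‖) ≤ inner ℝ ω (F uα - yδ) :=
    neg_le_of_abs_le (abs_real_inner_le_norm _ _)
  have hdata : inner ℝ ω (y - yδ) ≤ ‖ω‖ * δ :=
    (real_inner_le_norm _ _).trans (mul_le_mul_of_nonneg_left hnoise (norm_nonneg _))
  rw [Breg, hinner]
  nlinarith [mul_le_mul_of_nonneg_left hres hα, mul_le_mul_of_nonneg_left hdata hα]

end Tikhonov

theorem le_sq_div_of_mul_add_half_sq_le {α D t δ w : ℝ} (hα : 0 < α)
    (h : α * D + 2⁻¹ * t ^ 2 ≤ 2⁻¹ * δ ^ 2 + α * w * (t + δ)) :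
    D ≤ (δ + α * w) ^ 2 / (2 * α) := by
  rw [le_div_iff₀ (by positivity)]
  nlinarith [sq_nonneg (t - α * w)]

theorem le_add_two_mul_of_mul_add_half_sq_le {α D t δ w : ℝ} (hα : 0 ≤ α) (hD : 0 ≤ D)
    (hδ : 0 ≤ δ) (hw : 0 ≤ w) (h : α * D + 2⁻¹ * t ^ 2 ≤ 2⁻¹ * δ ^ 2 + α * w * (t + δ)) :
    t ≤ δ + 2 * α * w := by
  have hsq : (t - α * w) ^ 2 ≤ (δ + α * w) ^ 2 := by nlinarith [mul_nonneg hα hD]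
  linarith [abs_le_of_sq_le_sq' hsq (by positivity)]

theorem tikhonov_quantitative_estimates_general
    {U V : Type*} [NormedAddCommGroup U] [InnerProductSpace ℝ U] [CompleteSpace U]
    [NormedAddCommGroup V] [InnerProductSpace ℝ V] [CompleteSpace V]
    (F : U →L[ℝ] V) (R : U → ℝ≥0∞)
    (y : V) (udag : U) (hsol : F udag = y) (hfin : R udag ≠ ⊤)
    (ω : V) (ξ : U) (hξ : ξ = (ContinuousLinearMap.adjoint F) ω)
    (hsource : ∀ u : U,
      ENNReal.ofReal ((R udag).toReal + (inner ℝ ξ (u - udag) : ℝ)) ≤ R u)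
    (δ : ℝ) (yδ : V) (hnoise : ‖y - yδ‖ ≤ δ)
    (α : ℝ) (hα : 0 < α) (uα : U)
    (hmin : ∀ w : U, Tik F R α yδ uα ≤ Tik F R α yδ w) (hfinα : R uα ≠ ⊤) :
    Breg R ξ uα udag ≤ (δ + α * ‖ω‖) ^ 2 / (2 * α) ∧
    ‖F uα - yδ‖ ≤ δ + 2 * α * ‖ω‖ := by
  subst hξ
  have hδ : 0 ≤ δ := (norm_nonneg _).trans hnoise
  have key := mul_Breg_add_half_sq_le F ω hα.le hsol hfin hfinα hnoise (hmin udag)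
  exact ⟨le_sq_div_of_mul_add_half_sq_le hα key,
    le_add_two_mul_of_mul_add_half_sq_le hα.le (Breg_nonneg hsource hfinα) hδ
      (norm_nonneg ω) key⟩

/-- Under the source condition `ξ = F* ω ∈ ∂R(u†)`, for `‖y − y^δ‖ ≤ δ`
and any minimizer `u_α` of `T_{α,y^δ}` with `R(u_α) < ∞`, one has
`D_ξ(u_α, u†) ≤ (δ + α‖ω‖)²/(2α)` and `‖F u_α − y^δ‖ ≤ δ + 2α‖ω‖`. -/
theorem tikhonov_quantitative_estimates
    {U V : Type*} [NormedAddCommGroup U] [InnerProductSpace ℝ U] [CompleteSpace U]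
    [NormedAddCommGroup V] [InnerProductSpace ℝ V] [CompleteSpace V]
    (F : U →L[ℝ] V) (R : U → ℝ≥0∞)
    (hproper : ∃ u : U, R u ≠ ⊤)
    (hconvex : ∀ u v : U, ∀ t : ℝ, 0 ≤ t → t ≤ 1 →
      R (t • u + (1 - t) • v) ≤ ENNReal.ofReal t * R u + ENNReal.ofReal (1 - t) * R v)
    (y : V) (udag : U) (hsol : F udag = y) (hfin : R udag ≠ ⊤)
    (ω : V) (ξ : U) (hξ : ξ = (ContinuousLinearMap.adjoint F) ω)
    (hsource : ∀ u : U,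
      ENNReal.ofReal ((R udag).toReal + (inner ℝ ξ (u - udag) : ℝ)) ≤ R u)
    (δ : ℝ) (hδ : 0 < δ) (yδ : V) (hnoise : ‖y - yδ‖ ≤ δ)
    (α : ℝ) (hα : 0 < α) (uα : U)
    (hmin : ∀ w : U, Tik F R α yδ uα ≤ Tik F R α yδ w) (hfinα : R uα ≠ ⊤) :
    Breg R ξ uα udag ≤ (δ + α * ‖ω‖) ^ 2 / (2 * α) ∧
    ‖F uα - yδ‖ ≤ δ + 2 * α * ‖ω‖ :=
  tikhonov_quantitative_estimates_general F R y udag hsol hfin ω ξ hξ hsource δ yδ hnoise α hα uα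
    hmin hfinα
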